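/- Let L̃, L be complete lattices with L̃ ∼_k L, let k̄ : L̃² → L² map (x̃,ỹ) to (k(x̃),k(ỹ)), and let Ã and A be approximations on L̃² and L² respectively such that Ã k̄-mimics A. Then the lower stable operator of Ã k-mimics that of A, the upper stable operator of Ã k-mimics that of A, and the partial stable operator C_Ã k̄-mimics C_A. -/
import Mathlib


/-- Least fixpoint as the infimum of the prefixpoints (Knaster–Tarski). -/
def lfpSet {α : Type*} [CompleteLattice α] (f : α → α) : α := sInf {a | f a ≤ a}

lemma lfpSet_le {α : Type*} [CompleteLattice α] {f : α → α} {a : α} (h : f a ≤ a) :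
    lfpSet f ≤ a := sInf_le h

lemma lfpSet_fixed {α : Type*} [CompleteLattice α] {f : α → α} (hf : Monotone f) :
    f (lfpSet f) = lfpSet f := by
  have h1 : f (lfpSet f) ≤ lfpSet f := by
    apply le_sInf
    intro a ha
    exact le_trans (hf (lfpSet_le ha)) ha
  exact le_antisymm h1 (lfpSet_le (hf h1))

lemma k_mono {Lt L : Type*} [CompleteLattice Lt] [CompleteLattice L] {k : Lt → L}
    (hchain : ∀ C : Set Lt, C.Nonempty → IsChain (· ≤ ·) C →
        k (sInf C) = sInf (k '' C) ∧ k (sSup C) = sSup (k '' C)) :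
    Monotone k := by
  intro x y hxy
  have hC : IsChain (· ≤ ·) ({x, y} : Set Lt) := by
    intro a ha b hb hab
    rcases ha with rfl | ha <;> rcases hb with rfl | hb
    · exact absurd rfl hab
    · exact Or.inl (hb ▸ hxy)
    · exact Or.inr (ha ▸ hxy)
    · simp_all
  have := (hchain {x, y} ⟨x, by simp⟩ hC).2
  rw [sSup_pair, sup_of_le_right hxy, Set.image_pair, sSup_pair] at this
  rw [this]
  exact le_sup_left

/-- Key lemma: k reflects least fixpoints. -/
lemma key {Lt L : Type*} [CompleteLattice Lt] [CompleteLattice L] (k : Lt → L)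
    (hchain : ∀ C : Set Lt, C.Nonempty → IsChain (· ≤ ·) C →
        k (sInf C) = sInf (k '' C) ∧ k (sSup C) = sSup (k '' C))
    (hcentral : ∀ x : L, (∃ y : Lt, k y = x) →
        ∃ c : Lt, k c = x ∧ ∀ d : Lt, k d = x → c ≤ d ∨ d ≤ c)
    (ft : Lt → Lt) (f : L → L) (hft : Monotone ft) (hf : Monotone f)
    (hc : ∀ c, k (ft c) = f (k c))
    (him : ∃ z, k z = lfpSet f) :
    k (lfpSet ft) = lfpSet f := by
  have hkm := k_mono hchain
  have hfix : f (lfpSet f) = lfpSet f := lfpSet_fixed hf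
  -- lower bound
  have h1 : lfpSet f ≤ k (lfpSet ft) := by
    apply lfpSet_le
    rw [← hc, lfpSet_fixed hft]
  -- upper bound
  obtain ⟨z, hz, hzc⟩ := hcentral (lfpSet f) him
  have hkftz : k (ft z) = lfpSet f := by rw [hc, hz, hfix]
  rcases hzc (ft z) hkftz with hle | hle
  · -- z ≤ ft z : Zorn
    set S : Set Lt := {c | k c ≤ lfpSet f ∧ c ≤ ft c} with hS
    have hzS : z ∈ S := ⟨le_of_eq hz, hle⟩
    obtain ⟨m, _, hmS, hmmax⟩ := zorn_le_nonempty₀ S (fun c hcS hchainc y hy => by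
      refine ⟨sSup c, ⟨?_, ?_⟩, fun w hw => le_sSup hw⟩
      · rw [(hchain c ⟨y, hy⟩ hchainc).2]
        exact sSup_le (by rintro _ ⟨w, hw, rfl⟩; exact (hcS hw).1)
      · exact sSup_le fun w hw => le_trans (hcS hw).2 (hft (le_sSup hw))) z hzS
    have hftm : ft m ∈ S := ⟨by rw [hc]; exact le_trans (hf hmS.1) (le_of_eq hfix), hft hmS.2⟩
    have heq : ft m = m := le_antisymm (hmmax hftm hmS.2) hmS.2
    exact le_antisymm (le_trans (hkm (lfpSet_le (le_of_eq heq))) hmS.1) h1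
  · -- ft z ≤ z
    exact le_antisymm (le_trans (hkm (lfpSet_le hle)) (le_of_eq hz)) h1

theorem stable_operators_mimic' {Lt L : Type*} [CompleteLattice Lt] [CompleteLattice L]
    (k : Lt → L)
    (hchain : ∀ C : Set Lt, C.Nonempty → IsChain (· ≤ ·) C →
        k (sInf C) = sInf (k '' C) ∧ k (sSup C) = sSup (k '' C))
    (hcentral : ∀ x : L, (∃ y : Lt, k y = x) →
        ∃ c : Lt, k c = x ∧ ∀ d : Lt, k d = x → c ≤ d ∨ d ≤ c)
    (At : Lt × Lt → Lt × Lt) (A : L × L → L × L)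
    (hAt : ∀ p q : Lt × Lt, p.1 ≤ q.1 → q.2 ≤ p.2 →
        (At p).1 ≤ (At q).1 ∧ (At q).2 ≤ (At p).2)
    (hA : ∀ p q : L × L, p.1 ≤ q.1 → q.2 ≤ p.2 →
        (A p).1 ≤ (A q).1 ∧ (A q).2 ≤ (A p).2)
    (hcomm : ∀ p : Lt × Lt, (k (At p).1, k (At p).2) = A (k p.1, k p.2))
    (himg : ∀ p : L × L, ∃ q : Lt × Lt, (k q.1, k q.2) = A p) :
    ((∀ y : Lt, k (lfpSet (fun a => (At (a, y)).1)) =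
        lfpSet (fun a => (A (a, k y)).1)) ∧
     (∀ y : L, ∃ z : Lt, k z = lfpSet (fun a => (A (a, y)).1))) ∧
    ((∀ x : Lt, k (lfpSet (fun b => (At (x, b)).2)) =
        lfpSet (fun b => (A (k x, b)).2)) ∧
     (∀ x : L, ∃ z : Lt, k z = lfpSet (fun b => (A (x, b)).2))) ∧
    ((∀ p : Lt × Lt,
        (k (lfpSet (fun a => (At (a, p.2)).1)), k (lfpSet (fun b => (At (p.1, b)).2)))
          = (lfpSet (fun a => (A (a, k p.2)).1), lfpSet (fun b => (A (k p.1, b)).2))) ∧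
     (∀ p : L × L, ∃ q : Lt × Lt,
        (k q.1, k q.2) =
          (lfpSet (fun a => (A (a, p.2)).1), lfpSet (fun b => (A (p.1, b)).2)))) := by
  -- monotonicity of the component operators
  have hf1 : ∀ y : L, Monotone (fun a => (A (a, y)).1) :=
    fun y a a' h => (hA (a, y) (a', y) h le_rfl).1
  have hf2 : ∀ x : L, Monotone (fun b => (A (x, b)).2) :=
    fun x b b' h => (hA (x, b') (x, b) le_rfl h).2
  have hft1 : ∀ y : Lt, Monotone (fun a => (At (a, y)).1) :=
    fun y a a' h => (hAt (a, y) (a', y) h le_rfl).1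
  have hft2 : ∀ x : Lt, Monotone (fun b => (At (x, b)).2) :=
    fun x b b' h => (hAt (x, b') (x, b) le_rfl h).2
  -- surjectivity onto the stable fixpoints
  have hsurj1 : ∀ y : L, ∃ z : Lt, k z = lfpSet (fun a => (A (a, y)).1) := by
    intro y
    obtain ⟨q, hq⟩ := himg (lfpSet (fun a => (A (a, y)).1), y)
    exact ⟨q.1, (congrArg Prod.fst hq).trans (lfpSet_fixed (hf1 y))⟩
  have hsurj2 : ∀ x : L, ∃ z : Lt, k z = lfpSet (fun b => (A (x, b)).2) := by
    intro x
    obtain ⟨q, hq⟩ := himg (x, lfpSet (fun b => (A (x, b)).2))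
    exact ⟨q.2, (congrArg Prod.snd hq).trans (lfpSet_fixed (hf2 x))⟩
  have hcomm1 : ∀ y : Lt, k (lfpSet (fun a => (At (a, y)).1)) =
      lfpSet (fun a => (A (a, k y)).1) := by
    intro y
    exact key k hchain hcentral _ _ (hft1 y) (hf1 (k y))
      (fun c => congrArg Prod.fst (hcomm (c, y))) (hsurj1 (k y))
  have hcomm2 : ∀ x : Lt, k (lfpSet (fun b => (At (x, b)).2)) =
      lfpSet (fun b => (A (k x, b)).2) := by
    intro x
    exact key k hchain hcentral _ _ (hft2 x) (hf2 (k x))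
      (fun c => congrArg Prod.snd (hcomm (x, c))) (hsurj2 (k x))
  refine ⟨⟨hcomm1, hsurj1⟩, ⟨hcomm2, hsurj2⟩, ?_, ?_⟩
  · intro p
    rw [hcomm1 p.2, hcomm2 p.1]
  · intro p
    obtain ⟨z1, hz1⟩ := hsurj1 p.2
    obtain ⟨z2, hz2⟩ := hsurj2 p.1
    exact ⟨(z1, z2), by simp [hz1, hz2]⟩

/-- If L̃ ∼_k L and the approximation Ã k̄-mimics the approximation A (where
k̄(x̃,ỹ) = (k x̃, k ỹ)), then the lower stable operator of Ã k-mimics that of A,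
the upper stable operator of Ã k-mimics that of A, and the partial stable
operator C_Ã k̄-mimics C_A. -/
theorem stable_operators_mimic {Lt L : Type*} [CompleteLattice Lt] [CompleteLattice L]
    (k : Lt → L)
    -- L̃ ∼_k L : k is chain-continuous and non-empty preimages have central elements
    (hchain : ∀ C : Set Lt, C.Nonempty → IsChain (· ≤ ·) C →
        k (sInf C) = sInf (k '' C) ∧ k (sSup C) = sSup (k '' C))
    (hcentral : ∀ x : L, (∃ y : Lt, k y = x) →
        ∃ c : Lt, k c = x ∧ ∀ d : Lt, k d = x → c ≤ d ∨ d ≤ c)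
    (At : Lt × Lt → Lt × Lt) (A : L × L → L × L)
    -- Ã and A are approximations (≤_p-monotone)
    (hAt : ∀ p q : Lt × Lt, p.1 ≤ q.1 → q.2 ≤ p.2 →
        (At p).1 ≤ (At q).1 ∧ (At q).2 ≤ (At p).2)
    (hA : ∀ p q : L × L, p.1 ≤ q.1 → q.2 ≤ p.2 →
        (A p).1 ≤ (A q).1 ∧ (A q).2 ≤ (A p).2)
    -- Ã k̄-mimics A
    (hcomm : ∀ p : Lt × Lt, (k (At p).1, k (At p).2) = A (k p.1, k p.2))
    (himg : ∀ p : L × L, ∃ q : Lt × Lt, (k q.1, k q.2) = A p) :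
    -- C↓_Ã k-mimics C↓_A
    ((∀ y : Lt, k (lfpSet (fun a => (At (a, y)).1)) =
        lfpSet (fun a => (A (a, k y)).1)) ∧
     (∀ y : L, ∃ z : Lt, k z = lfpSet (fun a => (A (a, y)).1))) ∧
    -- C↑_Ã k-mimics C↑_A
    ((∀ x : Lt, k (lfpSet (fun b => (At (x, b)).2)) =
        lfpSet (fun b => (A (k x, b)).2)) ∧
     (∀ x : L, ∃ z : Lt, k z = lfpSet (fun b => (A (x, b)).2))) ∧
    -- C_Ã k̄-mimics C_A
    ((∀ p : Lt × Lt,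
        (k (lfpSet (fun a => (At (a, p.2)).1)), k (lfpSet (fun b => (At (p.1, b)).2)))
          = (lfpSet (fun a => (A (a, k p.2)).1), lfpSet (fun b => (A (k p.1, b)).2))) ∧
     (∀ p : L × L, ∃ q : Lt × Lt,
        (k q.1, k q.2) =
          (lfpSet (fun a => (A (a, p.2)).1), lfpSet (fun b => (A (p.1, b)).2)))) := by
  exact stable_operators_mimic' k hchain hcentral At A hAt hA hcomm himg
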